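/- Assume n ≥ 2 and fix a non-manipulating agent a₂. For every S ∈ Δ, every item i ∈ S ∖ D(a₂, b(a₂,S)) satisfies rk_{a₂}(b(a₂,S)) + 1 ≤ rk_{a₂}(i) ≤ rk_{a₂}(b(a₂,S)) + 2·rg^max. -/

import Mathlib

/-- Items are `Fin m`; a ranking is a bijection `Fin m ≃ Fin m`
(`rk i` is the rank of item `i`; lower rank = more preferred).
`IsBest rk S b` says that `b` is the item of `I ∖ S` with minimum rank,
i.e. `b = b(a, S)` for an agent with ranking `rk`. -/
def IsBest {m : ℕ} (rk : Fin m ≃ Fin m) (S : Finset (Fin m)) (b : Fin m) : Prop :=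
  b ∉ S ∧ ∀ j ∉ S, rk b ≤ rk j

/-- `D rk i` : the set of items strictly preferred to `i` under the ranking `rk`. -/
def D {m : ℕ} (rk : Fin m ≃ Fin m) (i : Fin m) : Finset (Fin m) :=
  Finset.univ.filter fun j => rk j < rk i

/-- `Δ` : the family of proper subsets `S ⊊ I` with `⋃_{a ≠ a₁} D(a, b(a,S)) = S`. -/
def Delta {A : Type*} {m : ℕ} (a₁ : A) (rk : A → Fin m ≃ Fin m) :
    Set (Finset (Fin m)) :=
  {S | S ⊂ Finset.univ ∧ ∀ b : A → Fin m, (∀ a, IsBest (rk a) S (b a)) →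
    {j : Fin m | ∃ a, a ≠ a₁ ∧ j ∈ D (rk a) (b a)} = ↑S}

/-- The ranks (as natural numbers) given to item `i` by the non-manipulators. -/
def nonManipRanks {A : Type*} [Fintype A] [DecidableEq A] {m : ℕ}
    (a₁ : A) (rk : A → Fin m ≃ Fin m) (i : Fin m) : Finset ℕ :=
  (Finset.univ.filter fun a => a ≠ a₁).image fun a => (rk a i : ℕ)

/-- The range of an item: `max_{a ≠ a₁} rk_a(i) − min_{a ≠ a₁} rk_a(i) + 1`. -/
def rg {A : Type*} [Fintype A] [DecidableEq A] {m : ℕ}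
    (a₁ : A) (rk : A → Fin m ≃ Fin m) (i : Fin m) : ℕ :=
  (nonManipRanks a₁ rk i).max.unbotD 0 - (nonManipRanks a₁ rk i).min.untopD 0 + 1

/-- `rg^max` : the maximum range of an item. -/
def rgMax {A : Type*} [Fintype A] [DecidableEq A] {m : ℕ}
    (a₁ : A) (rk : A → Fin m ≃ Fin m) : ℕ :=
  Finset.univ.sup fun i : Fin m => rg a₁ rk i

/-!
Since `S ∈ Δ` and `i ∈ S`, some non-manipulator `a` strictly prefers `i` to its best item
outside `S`, hence to `b₂ ∉ S`. Any two non-manipulators rank an item less than its range apart,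
so moving the ranks of `i` and `b₂` from `a` to `a₂` costs less than `rg^max` each.
-/

section SequentialAllocation

variable {A : Type*} {m : ℕ}

lemma mem_D {rk : Fin m ≃ Fin m} {i j : Fin m} : j ∈ D rk i ↔ rk j < rk i := by
  simp [D]

lemma exists_isBest (rk : Fin m ≃ Fin m) {S : Finset (Fin m)} (hS : S ⊂ Finset.univ) :
    ∃ b, IsBest rk S b := by
  obtain ⟨x, -, hx⟩ := Finset.exists_of_ssubset hS
  obtain ⟨b, hb, hmin⟩ := Finset.exists_min_image Sᶜ rk ⟨x, Finset.mem_compl.2 hx⟩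
  exact ⟨b, Finset.mem_compl.1 hb, fun j hj => hmin j (Finset.mem_compl.2 hj)⟩

lemma exists_rank_lt_isBest_of_mem_Delta {a₁ : A} {rk : A → Fin m ≃ Fin m}
    {S : Finset (Fin m)} (hS : S ∈ Delta a₁ rk) {i : Fin m} (hi : i ∈ S) :
    ∃ a, a ≠ a₁ ∧ ∃ b, IsBest (rk a) S b ∧ rk a i < rk a b := by
  choose b hb using fun a => exists_isBest (rk a) hS.1
  have hiD : i ∈ {j : Fin m | ∃ a, a ≠ a₁ ∧ j ∈ D (rk a) (b a)} := by
    rw [hS.2 b hb]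
    exact hi
  obtain ⟨a, ha, hia⟩ := hiD
  exact ⟨a, ha, b a, hb a, mem_D.1 hia⟩

variable [Fintype A] [DecidableEq A]

lemma rank_lt_rank_add_rg {a₁ a a' : A} (ha : a ≠ a₁) (ha' : a' ≠ a₁)
    (rk : A → Fin m ≃ Fin m) (j : Fin m) :
    (rk a j : ℕ) < rk a' j + rg a₁ rk j := by
  have mem_ranks : ∀ {c}, c ≠ a₁ → (rk c j : ℕ) ∈ nonManipRanks a₁ rk j := fun hc =>
    Finset.mem_image.2 ⟨_, Finset.mem_filter.2 ⟨Finset.mem_univ _, hc⟩, rfl⟩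
  have hne : (nonManipRanks a₁ rk j).Nonempty := ⟨_, mem_ranks ha⟩
  have hrg : rg a₁ rk j =
      (nonManipRanks a₁ rk j).max' hne - (nonManipRanks a₁ rk j).min' hne + 1 := by
    rw [rg, ← Finset.coe_max' hne, ← Finset.coe_min' hne]
    rfl
  have hmax := Finset.le_max' _ _ (mem_ranks ha)
  have hmin := Finset.min'_le _ _ (mem_ranks ha')
  omega

lemma rg_le_rgMax (a₁ : A) (rk : A → Fin m ≃ Fin m) (j : Fin m) :
    rg a₁ rk j ≤ rgMax a₁ rk :=
  Finset.le_sup (f := fun i => rg a₁ rk i) (Finset.mem_univ j)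

lemma rank_lt_rank_add_two_mul_rgMax_of_mem_Delta {a₁ a : A} (ha : a ≠ a₁)
    {rk : A → Fin m ≃ Fin m} {S : Finset (Fin m)} (hS : S ∈ Delta a₁ rk)
    {i b : Fin m} (hi : i ∈ S) (hb : b ∉ S) :
    (rk a i : ℕ) < rk a b + 2 * rgMax a₁ rk := by
  obtain ⟨a', ha', b', hb', hlt⟩ := exists_rank_lt_isBest_of_mem_Delta hS hi
  have i_moved := rank_lt_rank_add_rg ha ha' rk i
  have b_moved := rank_lt_rank_add_rg ha' ha rk b
  have i_before_b : (rk a' i : ℕ) < rk a' b := lt_of_lt_of_le hlt (hb'.2 b hb)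
  have rg_i := rg_le_rgMax a₁ rk i
  have rg_b := rg_le_rgMax a₁ rk b
  omega

end SequentialAllocation

theorem statement9_general {A : Type*} [Fintype A] [DecidableEq A] {m : ℕ}
    (a₁ a₂ : A) (ha₂ : a₂ ≠ a₁) (rk : A → Fin m ≃ Fin m)
    (S : Finset (Fin m)) (hS : S ∈ Delta a₁ rk)
    (b₂ : Fin m) (hb₂ : IsBest (rk a₂) S b₂)
    (i : Fin m) (hi : i ∈ S \ D (rk a₂) b₂) :
    (rk a₂ b₂ : ℕ) + 1 ≤ (rk a₂ i : ℕ) ∧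
      (rk a₂ i : ℕ) ≤ (rk a₂ b₂ : ℕ) + 2 * rgMax a₁ rk := by
  obtain ⟨hiS, hiD⟩ := Finset.mem_sdiff.1 hi
  have hne : b₂ ≠ i := ne_of_mem_of_not_mem hiS hb₂.1 |>.symm
  refine ⟨?_, (rank_lt_rank_add_two_mul_rgMax_of_mem_Delta ha₂ hS hiS hb₂.1).le⟩
  exact lt_of_le_of_ne (not_lt.1 (mt mem_D.2 hiD)) ((rk a₂).injective.ne hne)

/-- assume `n ≥ 2` and fix a non-manipulator `a₂`.  For every
`S ∈ Δ`, every item `i ∈ S ∖ D(a₂, b(a₂,S))` satisfies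
`rk_{a₂}(b(a₂,S)) + 1 ≤ rk_{a₂}(i) ≤ rk_{a₂}(b(a₂,S)) + 2·rg^max`. -/
theorem statement9 {A : Type*} [Fintype A] [DecidableEq A] {m : ℕ}
    (a₁ a₂ : A) (ha₂ : a₂ ≠ a₁) (rk : A → Fin m ≃ Fin m)
    (hn : 2 ≤ Fintype.card A)
    (S : Finset (Fin m)) (hS : S ∈ Delta a₁ rk)
    (b₂ : Fin m) (hb₂ : IsBest (rk a₂) S b₂)
    (i : Fin m) (hi : i ∈ S \ D (rk a₂) b₂) :
    (rk a₂ b₂ : ℕ) + 1 ≤ (rk a₂ i : ℕ) ∧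
      (rk a₂ i : ℕ) ≤ (rk a₂ b₂ : ℕ) + 2 * rgMax a₁ rk :=
  statement9_general a₁ a₂ ha₂ rk S hS b₂ hb₂ i hi
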